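/- arXiv:2308.12581 — 3 statements merged into one kernel-verified Lean document; each statement's English description precedes it below -/
import Mathlib

section
/- If all m vectors G_1, ..., G_m lie within distance r_0 of a point p, and the Huber threshold satisfies T > 2r_0, then the minimizer of s ↦ Σ_{i=1}^m φ_T(‖s - G_i‖) equals the arithmetic mean (1/m)Σ_i G_i. -/
/-!
Write `μ` for the mean of the `G i`. Every `G i` lies within `2 r₀ < T` of `μ`, so at `μ` the Huber
loss is the squared loss. Away from `μ`, the parallel axis theorem makes the squared loss grow by
`m ‖s - μ‖² / 2`, while the Huber loss falls short of the squared loss by at most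
`m (‖s - μ‖ - (T - 2 r₀))₊² / 2`, which is strictly less. Hence `μ` is the unique minimizer.
-/

noncomputable def huber (T u : ℝ) : ℝ := if |u| ≤ T then u ^ 2 / 2 else T * |u| - T ^ 2 / 2

theorem huber_of_abs_le {T u : ℝ} (h : |u| ≤ T) : huber T u = u ^ 2 / 2 := if_pos h

theorem sq_div_two_sub_huber (T u : ℝ) : u ^ 2 / 2 - huber T u = max 0 (|u| - T) ^ 2 / 2 := by
  unfold huber
  split_ifs with h
  · rw [max_eq_left (by linarith)]; ring
  · rw [max_eq_right (by linarith), ← sq_abs u]; ring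

section Mean

variable {ι E : Type*} [Fintype ι] [NormedAddCommGroup E] [InnerProductSpace ℝ E]

noncomputable def mean (G : ι → E) : E := (Fintype.card ι : ℝ)⁻¹ • ∑ i, G i

variable [Nonempty ι]

theorem sum_mean_sub_eq_zero (G : ι → E) : ∑ i, (mean G - G i) = 0 := by
  have hcard : (Fintype.card ι : ℝ) ≠ 0 := Nat.cast_ne_zero.mpr Fintype.card_ne_zero
  rw [Finset.sum_sub_distrib, Finset.sum_const, Finset.card_univ, ← Nat.cast_smul_eq_nsmul ℝ,
    mean, smul_smul, mul_inv_cancel₀ hcard, one_smul, sub_self]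

theorem norm_mean_sub_le {G : ι → E} {p : E} {r : ℝ} (hG : ∀ i, ‖G i - p‖ ≤ r) :
    ‖mean G - p‖ ≤ r := by
  have hmem : mean G ∈ Metric.closedBall p r := by
    rw [mean, Finset.smul_sum]
    refine (convex_closedBall p r).sum_mem (fun _ _ => by positivity) ?_
      fun i _ => mem_closedBall_iff_norm.mpr (hG i)
    rw [Finset.sum_const, Finset.card_univ, nsmul_eq_mul,
      mul_inv_cancel₀ (Nat.cast_ne_zero.mpr Fintype.card_ne_zero)]
  exact mem_closedBall_iff_norm.mp hmem

theorem sum_norm_sub_sq_eq (G : ι → E) (a : E) :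
    ∑ i, ‖a - G i‖ ^ 2 = Fintype.card ι * ‖a - mean G‖ ^ 2 + ∑ i, ‖mean G - G i‖ ^ 2 := by
  have hcross : ∑ i, 2 * inner ℝ (a - mean G) (mean G - G i) = 0 := by
    rw [← Finset.mul_sum, ← inner_sum, sum_mean_sub_eq_zero, inner_zero_right, mul_zero]
  calc ∑ i, ‖a - G i‖ ^ 2
      = ∑ i, (‖a - mean G‖ ^ 2 + 2 * inner ℝ (a - mean G) (mean G - G i)
          + ‖mean G - G i‖ ^ 2) := by
        refine Finset.sum_congr rfl fun i _ => ?_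
        rw [← norm_add_sq_real, sub_add_sub_cancel]
    _ = Fintype.card ι * ‖a - mean G‖ ^ 2 + ∑ i, ‖mean G - G i‖ ^ 2 := by
        rw [Finset.sum_add_distrib, Finset.sum_add_distrib, hcross, add_zero, Finset.sum_const,
          Finset.card_univ, nsmul_eq_mul]

theorem sum_huber_mean_lt {G : ι → E} {T ρ : ℝ} (hG : ∀ i, ‖mean G - G i‖ ≤ ρ) (hT : ρ < T)
    {a : E} (ha : a ≠ mean G) :
    ∑ i, huber T ‖mean G - G i‖ < ∑ i, huber T ‖a - G i‖ := by
  set c := ‖a - mean G‖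
  set M := max 0 (c - (T - ρ))
  have hc : 0 < c := norm_pos_iff.mpr (sub_ne_zero.mpr ha)
  have hM : M < c := max_lt hc (by linarith)
  have hdefect : ∀ i, ‖a - G i‖ ^ 2 / 2 - huber T ‖a - G i‖ ≤ M ^ 2 / 2 := by
    intro i
    have hdist : ‖a - G i‖ ≤ c + ρ :=
      (norm_sub_le_norm_sub_add_norm_sub _ _ _).trans (add_le_add le_rfl (hG i))
    rw [sq_div_two_sub_huber, abs_norm]
    gcongr
    exact max_le_max le_rfl (by linarith)
  have hatμ : ∑ i, huber T ‖mean G - G i‖ = ∑ i, ‖mean G - G i‖ ^ 2 / 2 :=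
    Finset.sum_congr rfl fun i _ => huber_of_abs_le ((abs_norm _).trans_le ((hG i).trans hT.le))
  have hcard : (0 : ℝ) < Fintype.card ι := Nat.cast_pos.mpr Fintype.card_pos
  have hsum := Finset.sum_le_sum fun i (_ : i ∈ Finset.univ) => hdefect i
  rw [Finset.sum_sub_distrib, ← Finset.sum_div, sum_norm_sub_sq_eq, Finset.sum_const,
    Finset.card_univ, nsmul_eq_mul] at hsum
  rw [hatμ, ← Finset.sum_div]
  nlinarith [mul_lt_mul_of_pos_left (pow_lt_pow_left₀ hM (le_max_left _ _) two_ne_zero) hcard]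

end Mean

theorem stmt_2_general (d m : ℕ) (hm : 0 < m) (T r0 : ℝ) (hT : 2 * r0 < T)
    (G : Fin m → EuclideanSpace ℝ (Fin d)) (p : EuclideanSpace ℝ (Fin d))
    (hG : ∀ i, ‖G i - p‖ ≤ r0)
    (a : EuclideanSpace ℝ (Fin d))
    (ha : IsMinOn (fun s => ∑ i, huber T ‖s - G i‖) Set.univ a) :
    a = (m : ℝ)⁻¹ • ∑ i, G i := by
  have : Nonempty (Fin m) := ⟨⟨0, hm⟩⟩
  have hmean : mean G = (m : ℝ)⁻¹ • ∑ i, G i := by rw [mean, Fintype.card_fin]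
  have hspread : ∀ i, ‖mean G - G i‖ ≤ 2 * r0 := fun i =>
    calc ‖mean G - G i‖ ≤ ‖mean G - p‖ + ‖p - G i‖ := norm_sub_le_norm_sub_add_norm_sub ..
      _ ≤ 2 * r0 := by linarith [norm_mean_sub_le hG, norm_sub_rev p (G i), hG i]
  rw [← hmean]
  by_contra hne
  exact (sum_huber_mean_lt hspread hT hne).not_ge (ha (Set.mem_univ _))

/-- If all points `G i` lie within `r₀` of a common point `p` and `T > 2 r₀`, the minimizer of
the summed Huber loss is the arithmetic mean. -/
theorem stmt_2 (d m : ℕ) (hm : 0 < m) (T r0 : ℝ) (hr0 : 0 < r0) (hT : 2 * r0 < T)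
    (G : Fin m → EuclideanSpace ℝ (Fin d)) (p : EuclideanSpace ℝ (Fin d))
    (hG : ∀ i, ‖G i - p‖ ≤ r0)
    (a : EuclideanSpace ℝ (Fin d))
    (ha : IsMinOn (fun s => ∑ i, huber T ‖s - G i‖) Set.univ a) :
    a = (m : ℝ)⁻¹ • ∑ i, G i :=
  stmt_2_general d m hm T r0 hT G p hG a ha
end

section
/- Let F : ℝ^d → ℝ be μ-strongly convex and L-smooth with minimizer w* over a convex set W containing w*. Suppose a gradient oracle g satisfies ‖g(w) - ∇F(w)‖ ≤ Δ for all w ∈ W. Then the projected gradient iteration w_{t+1} = Π_W(w_t - η g(w_t)) with step size η ≤ 1/L satisfies ‖w_t - w*‖ ≤ (1 - ημ/2)^t ‖w_0 - w*‖ + 2Δ/μ for all t ≥ 0. -/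
/-!
With `ρ = 1 - ημ/2`, one exact gradient step contracts the distance to `w*` by
`√(1 - ημ) ≤ ρ`: strong convexity gives `⟪∇F x, x - w*⟫ ≥ μ‖x - w*‖²`, and the descent lemma
gives co-coercivity `‖∇F x‖² ≤ L⟪∇F x, x - w*⟫` at the critical point `w*`. Projecting onto
`W` does not increase the distance to `w* ∈ W`, and the oracle error costs at most `ηΔ`, so
`r (t+1) ≤ ρ r t + ηΔ` for `r t = ‖w t - w*‖`; since `ηΔ = (1 - ρ) (2Δ/μ)` this unrolls to
`r t ≤ ρ^t r 0 + 2Δ/μ`.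
-/

open Set RealInnerProductSpace
open scoped Gradient

section GradientDescent

variable {E : Type*} [NormedAddCommGroup E] [InnerProductSpace ℝ E] [CompleteSpace E]
  {F : E → ℝ} {μ L : ℝ}

theorem hasDerivAt_apply_add_smul (hF : Differentiable ℝ F) (x v : E) (s : ℝ) :
    HasDerivAt (fun s : ℝ => F (x + s • v)) ⟪∇ F (x + s • v), v⟫ s := by
  have hline : HasDerivAt (fun s : ℝ => x + s • v) v s := by
    simpa using ((hasDerivAt_id s).smul_const v).const_add x
  have := (hF _).hasGradientAt.hasFDerivAt.comp_hasDerivAt s hline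
  rwa [InnerProductSpace.toDual_apply_apply] at this

theorem apply_add_le_of_lipschitz_gradient (hF : Differentiable ℝ F)
    (hsmooth : ∀ x y, ‖∇ F x - ∇ F y‖ ≤ L * ‖x - y‖) (x v : E) :
    F (x + v) ≤ F x + ⟪∇ F x, v⟫ + L / 2 * ‖v‖ ^ 2 := by
  -- `φ` has derivative `⟪∇F (x + s v) - ∇F x, v⟫ - L s ‖v‖² ≤ 0` on `[0, 1]`.
  let φ : ℝ → ℝ := fun s => F (x + s • v) - s * ⟪∇ F x, v⟫ - L / 2 * s ^ 2 * ‖v‖ ^ 2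
  have hφ : ∀ s, HasDerivAt φ (⟪∇ F (x + s • v) - ∇ F x, v⟫ - L * s * ‖v‖ ^ 2) s := by
    intro s
    have := (((hasDerivAt_apply_add_smul hF x v s).sub ((hasDerivAt_id s).mul_const
      ⟪∇ F x, v⟫)).sub (((hasDerivAt_pow 2 s).const_mul (L / 2)).mul_const (‖v‖ ^ 2)))
    exact this.congr_deriv (by rw [inner_sub_left]; ring)
  have hanti : AntitoneOn φ (Icc 0 1) := by
    refine antitoneOn_of_hasDerivWithinAt_nonpos (convex_Icc 0 1)
      (fun s _ => (hφ s).continuousAt.continuousWithinAt) (fun s _ => (hφ s).hasDerivWithinAt)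
      fun s hs => ?_
    rw [interior_Icc] at hs
    have hnorm : ‖∇ F (x + s • v) - ∇ F x‖ ≤ L * s * ‖v‖ := by
      simpa [norm_smul, abs_of_pos hs.1, mul_assoc] using hsmooth (x + s • v) x
    have := real_inner_le_norm (∇ F (x + s • v) - ∇ F x) v
    nlinarith [norm_nonneg v]
  have := hanti (left_mem_Icc.2 zero_le_one) (right_mem_Icc.2 zero_le_one) zero_le_one
  simp only [φ, zero_smul, add_zero, one_smul] at this
  linarith

theorem mul_sq_norm_sub_le_inner_gradient_sub
    (hstrong : ∀ x y, F x + ⟪∇ F x, y - x⟫ + μ / 2 * ‖y - x‖ ^ 2 ≤ F y) (x y : E) :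
    μ * ‖x - y‖ ^ 2 ≤ ⟪∇ F x - ∇ F y, x - y⟫ := by
  have hxy := hstrong x y
  have hyx := hstrong y x
  rw [← neg_sub x y, inner_neg_right, norm_neg] at hxy
  rw [inner_sub_left]
  linarith

theorem le_of_strongConvex_of_lipschitz_gradient [Nontrivial E]
    (hstrong : ∀ x y, F x + ⟪∇ F x, y - x⟫ + μ / 2 * ‖y - x‖ ^ 2 ≤ F y)
    (hsmooth : ∀ x y, ‖∇ F x - ∇ F y‖ ≤ L * ‖x - y‖) : μ ≤ L := by
  obtain ⟨x, y, hxy⟩ := exists_pair_ne E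
  have hpos : 0 < ‖x - y‖ := norm_pos_iff.2 (sub_ne_zero.2 hxy)
  have : μ * ‖x - y‖ ^ 2 ≤ L * ‖x - y‖ ^ 2 :=
    calc μ * ‖x - y‖ ^ 2 ≤ ⟪∇ F x - ∇ F y, x - y⟫ :=
          mul_sq_norm_sub_le_inner_gradient_sub hstrong x y
      _ ≤ ‖∇ F x - ∇ F y‖ * ‖x - y‖ := real_inner_le_norm _ _
      _ ≤ L * ‖x - y‖ * ‖x - y‖ := by gcongr; exact hsmooth x y
      _ = L * ‖x - y‖ ^ 2 := by ring
  exact le_of_mul_le_mul_right this (by positivity)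

theorem sq_norm_gradient_le_mul_inner (hF : Differentiable ℝ F)
    (hconvex : ∀ x y, F x + ⟪∇ F x, y - x⟫ ≤ F y)
    (hsmooth : ∀ x y, ‖∇ F x - ∇ F y‖ ≤ L * ‖x - y‖) (hL : 0 < L) {wstar : E}
    (hcrit : ∇ F wstar = 0) (x : E) :
    ‖∇ F x‖ ^ 2 ≤ L * ⟪∇ F x, x - wstar⟫ := by
  -- Co-coercivity: compare `F` at `x`, `x - ∇F x / L`, `wstar` and `wstar + ∇F x / L`.
  have hmin : F wstar ≤ F (x + -(L⁻¹ • ∇ F x)) := by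
    simpa [hcrit] using hconvex wstar (x + -(L⁻¹ • ∇ F x))
  have hx := apply_add_le_of_lipschitz_gradient hF hsmooth x (-(L⁻¹ • ∇ F x))
  have hstar := apply_add_le_of_lipschitz_gradient hF hsmooth wstar (L⁻¹ • ∇ F x)
  have hconv := hconvex x (wstar + L⁻¹ • ∇ F x)
  rw [hcrit, inner_zero_left, add_zero] at hstar
  rw [show wstar + L⁻¹ • ∇ F x - x = L⁻¹ • ∇ F x - (x - wstar) by abel, inner_sub_right] at hconv
  simp only [inner_neg_right, real_inner_smul_right, real_inner_self_eq_norm_sq, norm_neg,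
    norm_smul, Real.norm_eq_abs, abs_inv, abs_of_pos hL, mul_pow] at hx hstar hconv
  have hquad : L / 2 * (L⁻¹ ^ 2 * ‖∇ F x‖ ^ 2) = L⁻¹ * ‖∇ F x‖ ^ 2 / 2 := by
    field_simp
  have : L⁻¹ * ‖∇ F x‖ ^ 2 ≤ ⟪∇ F x, x - wstar⟫ := by linarith
  rwa [inv_mul_le_iff₀ hL] at this

theorem sq_norm_gradient_step_sub_le (hF : Differentiable ℝ F) (hμ : 0 ≤ μ)
    (hstrong : ∀ x y, F x + ⟪∇ F x, y - x⟫ + μ / 2 * ‖y - x‖ ^ 2 ≤ F y)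
    (hsmooth : ∀ x y, ‖∇ F x - ∇ F y‖ ≤ L * ‖x - y‖) (hL : 0 < L) {η : ℝ} (hη : 0 ≤ η)
    (hηL : η ≤ 1 / L) {wstar : E} (hcrit : ∇ F wstar = 0) (x : E) :
    ‖x - η • ∇ F x - wstar‖ ^ 2 ≤ (1 - η * μ) * ‖x - wstar‖ ^ 2 := by
  have hconvex : ∀ x y, F x + ⟪∇ F x, y - x⟫ ≤ F y := fun x y => by
    nlinarith [hstrong x y, sq_nonneg ‖y - x‖]
  have hmono := mul_sq_norm_sub_le_inner_gradient_sub hstrong x wstar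
  have hcoco := sq_norm_gradient_le_mul_inner hF hconvex hsmooth hL hcrit x
  rw [hcrit, sub_zero] at hmono
  have hηL' : η * L ≤ 1 := by rwa [le_div_iff₀ hL] at hηL
  rw [show x - η • ∇ F x - wstar = (x - wstar) - η • ∇ F x by abel, norm_sub_sq_real,
    real_inner_smul_right, norm_smul, Real.norm_eq_abs, abs_of_nonneg hη, real_inner_comm]
  have ha : 0 ≤ ⟪∇ F x, x - wstar⟫ := le_trans (by positivity) hmono
  nlinarith [mul_le_mul_of_nonneg_left hcoco (mul_nonneg hη hη),
    mul_le_mul_of_nonneg_left hmono hη, mul_nonneg (sub_nonneg.2 hηL') (mul_nonneg hη ha)]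

theorem norm_gradient_step_sub_le (hF : Differentiable ℝ F) (hμ : 0 ≤ μ)
    (hstrong : ∀ x y, F x + ⟪∇ F x, y - x⟫ + μ / 2 * ‖y - x‖ ^ 2 ≤ F y)
    (hsmooth : ∀ x y, ‖∇ F x - ∇ F y‖ ≤ L * ‖x - y‖) (hL : 0 < L) {η : ℝ} (hη : 0 ≤ η)
    (hηL : η ≤ 1 / L) (hημ : η * μ ≤ 1) {wstar : E} (hcrit : ∇ F wstar = 0) (x : E) :
    ‖x - η • ∇ F x - wstar‖ ≤ (1 - η * μ / 2) * ‖x - wstar‖ := by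
  refine le_of_pow_le_pow_left₀ two_ne_zero (by nlinarith [norm_nonneg (x - wstar)]) ?_
  calc ‖x - η • ∇ F x - wstar‖ ^ 2 ≤ (1 - η * μ) * ‖x - wstar‖ ^ 2 :=
        sq_norm_gradient_step_sub_le hF hμ hstrong hsmooth hL hη hηL hcrit x
    _ ≤ ((1 - η * μ / 2) * ‖x - wstar‖) ^ 2 := by
        nlinarith [mul_nonneg (sq_nonneg (η * μ)) (sq_nonneg ‖x - wstar‖)]

end GradientDescent

theorem Convex.norm_sub_le_norm_sub_of_nearest {E : Type*} [NormedAddCommGroup E]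
    [InnerProductSpace ℝ E] {K : Set E} (hK : Convex ℝ K) {y p z : E} (hp : p ∈ K)
    (hnear : ∀ q ∈ K, ‖y - p‖ ≤ ‖y - q‖) (hz : z ∈ K) : ‖p - z‖ ≤ ‖y - z‖ := by
  have : Nonempty K := ⟨⟨p, hp⟩⟩
  have hinf : ‖y - p‖ = ⨅ w : K, ‖y - w‖ :=
    le_antisymm (le_ciInf fun w => hnear w w.2)
      (ciInf_le (f := fun w : K => ‖y - w‖) ⟨0, by rintro _ ⟨w, rfl⟩; exact norm_nonneg _⟩ ⟨p, hp⟩)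
  have hobtuse : ⟪y - p, z - p⟫ ≤ 0 := (norm_eq_iInf_iff_real_inner_le_zero hK hp).1 hinf z hz
  have hexpand : ‖y - z‖ ^ 2 = ‖y - p‖ ^ 2 - 2 * ⟪y - p, z - p⟫ + ‖p - z‖ ^ 2 := by
    rw [show y - z = (y - p) - (z - p) by abel, norm_sub_sq_real, norm_sub_rev z p]
  refine le_of_pow_le_pow_left₀ two_ne_zero (norm_nonneg _) ?_
  nlinarith [sq_nonneg ‖y - p‖]

theorem norm_sub_smul_sub_le {V : Type*} [SeminormedAddCommGroup V] [NormedSpace ℝ V] {η : ℝ}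
    (hη : 0 ≤ η) (x u v z : V) : ‖x - η • u - z‖ ≤ ‖x - η • v - z‖ + η * ‖u - v‖ := by
  calc ‖x - η • u - z‖ = ‖(x - η • v - z) - η • (u - v)‖ := by rw [smul_sub]; abel_nf
    _ ≤ ‖x - η • v - z‖ + ‖η • (u - v)‖ := norm_sub_le _ _
    _ = ‖x - η • v - z‖ + η * ‖u - v‖ := by rw [norm_smul, Real.norm_of_nonneg hη]

theorem le_pow_mul_add_of_le_mul_add {r : ℕ → ℝ} {ρ b : ℝ} (hρ : 0 ≤ ρ) (hb : 0 ≤ b)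
    (hstep : ∀ t, r (t + 1) ≤ ρ * r t + (1 - ρ) * b) (t : ℕ) : r t ≤ ρ ^ t * r 0 + b := by
  induction t with
  | zero => simpa using hb
  | succ t ih =>
    calc r (t + 1) ≤ ρ * r t + (1 - ρ) * b := hstep t
      _ ≤ ρ * (ρ ^ t * r 0 + b) + (1 - ρ) * b := by gcongr
      _ = ρ ^ (t + 1) * r 0 + b := by ring

theorem stmt_3_general (d : ℕ) (F : EuclideanSpace ℝ (Fin d) → ℝ)
    (μ L η Δ : ℝ) (hμ : 0 < μ) (hη : 0 < η) (hηL : η ≤ 1 / L)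
    (W : Set (EuclideanSpace ℝ (Fin d))) (hW : Convex ℝ W)
    (wstar : EuclideanSpace ℝ (Fin d)) (hws : wstar ∈ W)
    (hdiff : Differentiable ℝ F)
    (hstrong : ∀ x y, F x + inner ℝ (gradient F x) (y - x) + μ / 2 * ‖y - x‖ ^ 2 ≤ F y)
    (hsmooth : ∀ x y, ‖gradient F x - gradient F y‖ ≤ L * ‖x - y‖)
    (hgradstar : gradient F wstar = 0)
    (g : EuclideanSpace ℝ (Fin d) → EuclideanSpace ℝ (Fin d))
    (hg : ∀ w ∈ W, ‖g w - gradient F w‖ ≤ Δ)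
    (proj : EuclideanSpace ℝ (Fin d) → EuclideanSpace ℝ (Fin d))
    (hproj : ∀ y, proj y ∈ W ∧ ∀ z ∈ W, ‖y - proj y‖ ≤ ‖y - z‖)
    (w : ℕ → EuclideanSpace ℝ (Fin d)) (hw0 : w 0 ∈ W)
    (hupdate : ∀ t, w (t + 1) = proj (w t - η • g (w t))) :
    ∀ t, ‖w t - wstar‖ ≤ (1 - η * μ / 2) ^ t * ‖w 0 - wstar‖ + 2 * Δ / μ := by
  have hΔ : 0 ≤ Δ := (norm_nonneg _).trans (hg wstar hws)
  rcases subsingleton_or_nontrivial (EuclideanSpace ℝ (Fin d)) with _ | _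
  · intro t
    rw [Subsingleton.elim (w t) wstar, Subsingleton.elim (w 0) wstar, sub_self, norm_zero,
      mul_zero, zero_add]
    positivity
  have hL : 0 < L := one_div_pos.1 (hη.trans_le hηL)
  have hημ : η * μ ≤ 1 :=
    calc η * μ ≤ 1 / L * L :=
          mul_le_mul hηL (le_of_strongConvex_of_lipschitz_gradient hstrong hsmooth) hμ.le
            (by positivity)
      _ = 1 := one_div_mul_cancel hL.ne'
  have hmem : ∀ t, w t ∈ W
    | 0 => hw0
    | t + 1 => hupdate t ▸ (hproj _).1
  refine le_pow_mul_add_of_le_mul_add (by linarith) (by positivity) fun t => ?_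
  calc ‖w (t + 1) - wstar‖ ≤ ‖w t - η • g (w t) - wstar‖ := by
        rw [hupdate t]; exact hW.norm_sub_le_norm_sub_of_nearest (hproj _).1 (hproj _).2 hws
    _ ≤ ‖w t - η • gradient F (w t) - wstar‖ + η * ‖g (w t) - gradient F (w t)‖ :=
        norm_sub_smul_sub_le hη.le _ _ _ _
    _ ≤ (1 - η * μ / 2) * ‖w t - wstar‖ + η * Δ := by
        gcongr
        · exact norm_gradient_step_sub_le hdiff hμ.le hstrong hsmooth hL hη.le hηL hημ hgradstar _
        · exact hg _ (hmem t)
    _ = (1 - η * μ / 2) * ‖w t - wstar‖ + (1 - (1 - η * μ / 2)) * (2 * Δ / μ) := by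
        field_simp
        ring

/-- Convergence of projected gradient descent with an inexact gradient oracle, for a
strongly convex and smooth objective. -/
theorem stmt_3 (d : ℕ) (F : EuclideanSpace ℝ (Fin d) → ℝ)
    (μ L η Δ : ℝ) (hμ : 0 < μ) (hL : 0 < L) (hη : 0 < η) (hηL : η ≤ 1 / L)
    (hΔ : 0 ≤ Δ)
    (W : Set (EuclideanSpace ℝ (Fin d))) (hW : Convex ℝ W) (hWclosed : IsClosed W)
    (wstar : EuclideanSpace ℝ (Fin d)) (hws : wstar ∈ W)
    (hdiff : Differentiable ℝ F)
    (hstrong : ∀ x y, F x + inner ℝ (gradient F x) (y - x) + μ / 2 * ‖y - x‖ ^ 2 ≤ F y)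
    (hsmooth : ∀ x y, ‖gradient F x - gradient F y‖ ≤ L * ‖x - y‖)
    (hgradstar : gradient F wstar = 0)
    (g : EuclideanSpace ℝ (Fin d) → EuclideanSpace ℝ (Fin d))
    (hg : ∀ w ∈ W, ‖g w - gradient F w‖ ≤ Δ)
    (proj : EuclideanSpace ℝ (Fin d) → EuclideanSpace ℝ (Fin d))
    (hproj : ∀ y, proj y ∈ W ∧ ∀ z ∈ W, ‖y - proj y‖ ≤ ‖y - z‖)
    (w : ℕ → EuclideanSpace ℝ (Fin d)) (hw0 : w 0 ∈ W)
    (hupdate : ∀ t, w (t + 1) = proj (w t - η • g (w t))) :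
    ∀ t, ‖w t - wstar‖ ≤ (1 - η * μ / 2) ^ t * ‖w 0 - wstar‖ + 2 * Δ / μ :=
  stmt_3_general d F μ L η Δ hμ hη hηL W hW wstar hws hdiff hstrong hsmooth hgradstar g hg proj
    hproj w hw0 hupdate
end

section
/- Let h : ℝ^d → ℝ be twice differentiable on a ball B(a, r) with ∇²h(s) ⪰ c·I for all s ∈ B(a, r), with c > 0. Let g be a point where ∇h(g) = 0. Then min{‖g - a‖, r} ≤ ‖∇h(a)‖ / c. -/
/-!
Let `t = min ‖g - a‖ r` and let `b` be the point of the segment `[a, g]` at distance `t` from `a`,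
so `b` lies in the ball. Integrating the Hessian bound along `[a, b]` gives
`c t² ≤ ⟪∇h b - ∇h a, b - a⟫`. Since `h` is convex, `s ↦ ⟪∇h (a + s (g - a)), g - a⟫` is
monotone and vanishes at `s = 1`, so `⟪∇h b, b - a⟫ ≤ 0`. Hence
`c t² ≤ -⟪∇h a, b - a⟫ ≤ ‖∇h a‖ t`.
-/

open Metric AffineMap

section

variable {E : Type*} [NormedAddCommGroup E] [InnerProductSpace ℝ E]

theorem hasDerivAt_comp_lineMap_of_differentiableAt [CompleteSpace E] {h : E → ℝ} {x y : E}
    {s : ℝ} (hh : DifferentiableAt ℝ h (lineMap x y s)) :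
    HasDerivAt (h ∘ lineMap x y) (inner ℝ (gradient h (lineMap x y s)) (y - x)) s := by
  rw [inner_gradient_left]
  exact hh.hasFDerivAt.comp_hasDerivAt s hasDerivAt_lineMap

theorem ConvexOn.monotone_inner_gradient_lineMap [CompleteSpace E] {h : E → ℝ}
    (hconv : ConvexOn ℝ Set.univ h) (hdiff : Differentiable ℝ h) (x y : E) :
    Monotone fun s : ℝ => inner ℝ (gradient h (lineMap x y s)) (y - x) := by
  have hderiv (s : ℝ) :=
    hasDerivAt_comp_lineMap_of_differentiableAt (x := x) (y := y) (hdiff (lineMap x y s))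
  intro s u hsu
  dsimp only
  rw [← (hderiv s).deriv, ← (hderiv u).deriv]
  exact (hconv.comp_affineMap (lineMap x y)).monotoneOn_deriv
    (fun s _ => (hderiv s).differentiableAt) trivial trivial hsu

theorem Convex.mul_norm_sub_sq_le_inner_sub_of_hasFDerivAt {S : Set E} (hS : Convex ℝ S)
    {f : E → E} {H : E → E →L[ℝ] E} {c : ℝ} (hf : ∀ s ∈ S, HasFDerivAt f (H s) s)
    (hH : ∀ s ∈ S, ∀ v, c * ‖v‖ ^ 2 ≤ inner ℝ v (H s v)) {x y : E} (hx : x ∈ S) (hy : y ∈ S) :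
    c * ‖y - x‖ ^ 2 ≤ inner ℝ (f y - f x) (y - x) := by
  have hmem : ∀ s ∈ Set.Icc (0 : ℝ) 1, lineMap x y s ∈ S := fun s hs =>
    hS.lineMap_mem hx hy hs
  have hderiv : ∀ s ∈ Set.Icc (0 : ℝ) 1, HasDerivAt (fun s => inner ℝ (f (lineMap x y s)) (y - x))
      (inner ℝ (H (lineMap x y s) (y - x)) (y - x)) s := fun s hs =>
    ((hf _ (hmem s hs)).comp_hasDerivAt s hasDerivAt_lineMap).inner ℝ (hasDerivAt_const s _)
      |>.congr_deriv (by simp)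
  have := (convex_Icc (0 : ℝ) 1).mul_sub_le_image_sub_of_le_deriv
    (fun s hs => (hderiv s hs).continuousAt.continuousWithinAt)
    (fun s hs => (hderiv s (interior_subset hs)).differentiableAt.differentiableWithinAt)
    (fun s hs => by
      rw [(hderiv s (interior_subset hs)).deriv, real_inner_comm]
      exact hH _ (hmem s (interior_subset hs)) _)
    0 (by simp) 1 (by simp) zero_le_one
  simpa [inner_sub_left] using this

end

/-- If `h` has Hessian bounded below by `c·I` on a ball around `a`, and `g` is a stationary
point of `h`, then `min{‖g - a‖, r} ≤ ‖∇h(a)‖ / c`. -/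
theorem stmt_11 (d : ℕ) (h : EuclideanSpace ℝ (Fin d) → ℝ)
    (hconv : ConvexOn ℝ Set.univ h)
    (hdiff : Differentiable ℝ h)
    (a : EuclideanSpace ℝ (Fin d)) (r c : ℝ) (hr : 0 < r) (hc : 0 < c)
    (H : EuclideanSpace ℝ (Fin d) →
      EuclideanSpace ℝ (Fin d) →L[ℝ] EuclideanSpace ℝ (Fin d))
    (hH : ∀ s ∈ Metric.closedBall a r, HasFDerivAt (gradient h) (H s) s)
    (hHlb : ∀ s ∈ Metric.closedBall a r, ∀ v : EuclideanSpace ℝ (Fin d),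
      c * ‖v‖ ^ 2 ≤ inner ℝ v (H s v))
    (g : EuclideanSpace ℝ (Fin d)) (hg : gradient h g = 0) :
    min ‖g - a‖ r ≤ ‖gradient h a‖ / c := by
  set t := min ‖g - a‖ r
  -- also fine for `g = a`, where `t = 0` and `b = lineMap a a 0 = a` since `t / 0 = 0`
  set b := lineMap a g (t / ‖g - a‖)
  have hb_sub : b - a = (t / ‖g - a‖) • (g - a) := lineMap_vsub_left a g _
  have hb_dist : ‖b - a‖ = t := by
    rw [hb_sub, norm_smul, Real.norm_of_nonneg (by positivity), div_mul_cancel_of_imp]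
    intro h0
    simp [t, h0, hr.le]
  have hb_mem : b ∈ closedBall a r := by
    rw [mem_closedBall, dist_eq_norm, hb_dist]
    exact min_le_right _ _
  have hstrong : c * t ^ 2 ≤ inner ℝ (gradient h b - gradient h a) (b - a) :=
    hb_dist ▸ (convex_closedBall a r).mul_norm_sub_sq_le_inner_sub_of_hasFDerivAt hH hHlb
      (mem_closedBall_self hr.le) hb_mem
  have hgrad_b : inner ℝ (gradient h b) (b - a) ≤ 0 := by
    have := hconv.monotone_inner_gradient_lineMap hdiff a g
      (div_le_one_of_le₀ (min_le_left _ r) (norm_nonneg (g - a)))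
    simp only [lineMap_apply_one, hg, inner_zero_left] at this
    rw [hb_sub, real_inner_smul_right]
    exact mul_nonpos_of_nonneg_of_nonpos (by positivity) this
  have hgrad_a : -inner ℝ (gradient h a) (b - a) ≤ ‖gradient h a‖ * t := by
    rw [← hb_dist, ← inner_neg_right, ← norm_neg (b - a)]
    exact real_inner_le_norm _ _
  have ht : c * t ^ 2 ≤ ‖gradient h a‖ * t := by
    rw [inner_sub_left] at hstrong
    linarith
  rw [le_div_iff₀ hc]
  rcases (show 0 ≤ t by positivity).eq_or_lt with ht0 | ht0
  · rw [← ht0, zero_mul]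
    positivity
  · nlinarith
end
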